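/- arXiv:2201.08940 — 4 statements merged into one kernel-verified Lean document; each statement's English description precedes it below -/
import Mathlib

section
/- Let E be a finite set, w : E → ℝ, and let 𝒴' be a finite collection of subsets of E. For e ∈ E, let In(e) be the number of sets in 𝒴' containing e and Ex(e) = |𝒴'| − In(e). Define w'(e) = w(e)·(Ex(e) − In(e)). Then for every subset X ⊆ E, Σ_{Y ∈ 𝒴'} w(X △ Y) = w'(X) + Σ_{e ∈ E} w(e)·In(e), where w(Z) = Σ_{e ∈ Z} w(e) and w'(Z) = Σ_{e ∈ Z} w'(e). -/
/-! Swap the two sums: each `e` contributes `w e` once for every `Y ∈ 𝒴'` with `e ∈ X △ Y`,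
that is `Ex(e)` times if `e ∈ X` and `In(e)` times otherwise. -/

open Finset

theorem Finset.sum_sum_eq_sum_card_filter_nsmul {ι E M : Type*} [Fintype E] [DecidableEq E]
    [AddCommMonoid M] (t : Finset ι) (s : ι → Finset E) (w : E → M) :
    ∑ i ∈ t, ∑ e ∈ s i, w e = ∑ e, #{i ∈ t | e ∈ s i} • w e := by
  rw [Finset.sum_comm' (t' := univ) (s' := fun e => {i ∈ t | e ∈ s i}) (by simp)]
  simp only [sum_const]

theorem Finset.card_filter_mem_symmDiff {ι E : Type*} [DecidableEq E] (t : Finset ι)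
    (X : Finset E) (Y : ι → Finset E) (e : E) :
    #{i ∈ t | e ∈ symmDiff X (Y i)} = if e ∈ X then #{i ∈ t | e ∉ Y i} else #{i ∈ t | e ∈ Y i} := by
  split_ifs with he <;> simp [mem_symmDiff, he]

theorem Finset.sum_ite_mem_eq_sum_sub_add {E R : Type*} [Fintype E] [DecidableEq E]
    [AddCommGroup R] (X : Finset E) (f g : E → R) :
    ∑ e, (if e ∈ X then f e else g e) = ∑ e ∈ X, (f e - g e) + ∑ e, g e := by
  have h := sum_ite_mem univ X fun e => f e - g e
  rw [univ_inter] at h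
  rw [← h, ← sum_add_distrib]
  refine sum_congr rfl fun e _ => ?_
  split_ifs <;> simp

/-- Lemma 3: with `w'(e) = w(e)·(Ex(e) − In(e))`, for every `X ⊆ E`,
`Σ_{Y ∈ 𝒴'} w(X △ Y) = w'(X) + Σ_{e ∈ E} w(e)·In(e)`. -/
theorem sum_weighted_symmDiff_eq
    {E : Type*} [Fintype E] [DecidableEq E] (w : E → ℝ)
    {n : ℕ} (𝒴 : Fin n → Finset E) (X : Finset E) :
    (∑ i, ∑ e ∈ symmDiff X (𝒴 i), w e) =
      (∑ e ∈ X, w e *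
          (((Finset.univ.filter fun i : Fin n => e ∉ 𝒴 i).card : ℝ) -
            ((Finset.univ.filter fun i : Fin n => e ∈ 𝒴 i).card : ℝ))) +
        ∑ e : E, w e * ((Finset.univ.filter fun i : Fin n => e ∈ 𝒴 i).card : ℝ) := by
  rw [sum_sum_eq_sum_card_filter_nsmul]
  simp_rw [card_filter_mem_symmDiff, nsmul_eq_mul, apply_ite (Nat.cast (R := ℝ)), mul_comm _ (w _),
    mul_ite, mul_sub]
  exact sum_ite_mem_eq_sum_sub_add X _ _
end

section
/- Let E be a finite set, w : E → ℝ, 𝒴' a finite collection of subsets of E, and define w'(e) = w(e)·(Ex(e) − In(e)) as before. Then for any family 𝒳 of subsets of E, a set X ∈ 𝒳 maximizes Σ_{Y ∈ 𝒴'} w(X △ Y) over 𝒳 if and only if X maximizes w'(X) over 𝒳. -/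
open Finset

/-! Writing `In(e)` for the number of `i` with `e ∈ Y i`, one has
`w(Z △ Y) = w(Z) + w(Y) - 2 w(Z ∩ Y)`, and summing over `i` gives
`Σᵢ w(Z △ Yᵢ) = Σ_{e ∈ Z} w(e)(n - 2 In(e)) + Σᵢ w(Yᵢ) = w'(Z) + Σᵢ w(Yᵢ)`.
The two objectives differ by a constant independent of `Z`, so they have the same maximizers. -/

section

variable {E ι M R : Type*} [DecidableEq E]

theorem Finset.sum_symmDiff_add_two_nsmul_sum_inter [AddCommMonoid M] (f : E → M)
    (s t : Finset E) :
    ∑ e ∈ symmDiff s t, f e + 2 • ∑ e ∈ s ∩ t, f e = ∑ e ∈ s, f e + ∑ e ∈ t, f e := by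
  rw [symmDiff_eq_sup_sdiff_inf, sup_eq_union, inf_eq_inter, two_nsmul, ← add_assoc,
    sum_sdiff inter_subset_union, sum_union_inter]

variable [Fintype ι] [CommRing R]

theorem sum_sum_inter_eq_sum_card_mul (w : E → R) (Y : ι → Finset E) (Z : Finset E) :
    ∑ i, ∑ e ∈ Z ∩ Y i, w e = ∑ e ∈ Z, (#{i | e ∈ Y i} : R) * w e := by
  simp_rw [← filter_mem_eq_inter, sum_filter]
  rw [sum_comm]
  refine sum_congr rfl fun e _ => ?_
  rw [natCast_card_filter, sum_mul]
  exact sum_congr rfl fun i _ => by rw [ite_mul, one_mul, zero_mul]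

theorem sum_sum_symmDiff_eq (w : E → R) (Y : ι → Finset E) (Z : Finset E) :
    ∑ i, ∑ e ∈ symmDiff Z (Y i), w e =
      ∑ e ∈ Z, w e * ((#{i | e ∉ Y i} : R) - #{i | e ∈ Y i}) + ∑ i, ∑ e ∈ Y i, w e := by
  have hsymm : ∀ i, ∑ e ∈ symmDiff Z (Y i), w e =
      ∑ e ∈ Z, w e + ∑ e ∈ Y i, w e - 2 * ∑ e ∈ Z ∩ Y i, w e := fun i => by
    rw [← sum_symmDiff_add_two_nsmul_sum_inter, nsmul_eq_mul, Nat.cast_ofNat, add_sub_cancel_right]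
  have hcard : ∀ e, (#{i | e ∉ Y i} : R) = Fintype.card ι - #{i | e ∈ Y i} := fun e => by
    rw [eq_sub_iff_add_eq, ← Nat.cast_add, add_comm, card_filter_add_card_filter_not, card_univ]
  simp_rw [hsymm, sum_sub_distrib, sum_add_distrib, ← mul_sum, sum_sum_inter_eq_sum_card_mul,
    hcard, sum_const, card_univ, nsmul_eq_mul, mul_sum]
  rw [sub_eq_iff_eq_add, add_right_comm, ← sum_add_distrib]
  congr 1
  refine sum_congr rfl fun e _ => ?_
  ring

end

theorem maximizer_symmDiff_iff_maximizer_modified_weight_general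
    {E : Type*} [DecidableEq E] (w : E → ℝ)
    {n : ℕ} (𝒴 : Fin n → Finset E) (𝒳 : Set (Finset E)) (X : Finset E) :
    letI w' : E → ℝ := fun e =>
      w e * (((Finset.univ.filter fun i : Fin n => e ∉ 𝒴 i).card : ℝ) -
        ((Finset.univ.filter fun i : Fin n => e ∈ 𝒴 i).card : ℝ))
    ((∀ Z ∈ 𝒳, (∑ i, ∑ e ∈ symmDiff Z (𝒴 i), w e) ≤ ∑ i, ∑ e ∈ symmDiff X (𝒴 i), w e) ↔
      (∀ Z ∈ 𝒳, (∑ e ∈ Z, w' e) ≤ ∑ e ∈ X, w' e)) := by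
  simp only [sum_sum_symmDiff_eq w 𝒴, add_le_add_iff_right]

/-- A set `X ∈ 𝒳` maximizes `Σ_{Y ∈ 𝒴'} w(X △ Y)` over `𝒳` iff it maximizes
`w'(X) = Σ_{e ∈ X} w(e)·(Ex(e) − In(e))` over `𝒳`. -/
theorem maximizer_symmDiff_iff_maximizer_modified_weight
    {E : Type*} [Fintype E] [DecidableEq E] (w : E → ℝ)
    {n : ℕ} (𝒴 : Fin n → Finset E) (𝒳 : Set (Finset E)) (X : Finset E)
    (hX : X ∈ 𝒳) :
    letI w' : E → ℝ := fun e =>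
      w e * (((Finset.univ.filter fun i : Fin n => e ∉ 𝒴 i).card : ℝ) -
        ((Finset.univ.filter fun i : Fin n => e ∈ 𝒴 i).card : ℝ))
    ((∀ Z ∈ 𝒳, (∑ i, ∑ e ∈ symmDiff Z (𝒴 i), w e) ≤ ∑ i, ∑ e ∈ symmDiff X (𝒴 i), w e) ↔
      (∀ Z ∈ 𝒳, (∑ e ∈ Z, w' e) ≤ ∑ e ∈ X, w' e)) :=
  maximizer_symmDiff_iff_maximizer_modified_weight_general w 𝒴 𝒳 X
end

section
/- Let G' = (V', E') be a graph, r' a nonnegative integer with 2r' ≤ |V'|, and w' : E' → ℝ a weight function. Construct H by adding a set U of |V'| − 2r' new vertices and all edges F = {{u, v} : u ∈ U, v ∈ V'}, with w'(f) = 0 for f ∈ F. If M* is a maximum-weight perfect matching of H, then M* \ F is a matching of G' of size exactly r', and for every matching M' of G' with |M'| = r', w'(M') ≤ w'(M* \ F). -/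
open Finset
open scoped Classical

/-- The auxiliary graph `H`: the graph `G'` together with `m` fresh vertices,
each joined to every original vertex (and to no fresh vertex). -/
def Hgraph {V' : Type*} (G' : SimpleGraph V') (m : ℕ) :
    SimpleGraph (V' ⊕ Fin m) where
  Adj x y :=
    match x, y with
    | Sum.inl a, Sum.inl b => G'.Adj a b
    | Sum.inl _, Sum.inr _ => True
    | Sum.inr _, Sum.inl _ => True
    | Sum.inr _, Sum.inr _ => False
  symm := by
    constructor
    rintro (a | a) (b | b) h
    exacts [h.symm, trivial, trivial, h]
  loopless := by
    constructor
    rintro (a | a) h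
    exacts [G'.irrefl h, h]

/-- An edge of `H` belonging to `F`, i.e. incident to a fresh vertex. -/
def isFEdge {V' : Type*} {m : ℕ} (e : Sym2 (V' ⊕ Fin m)) : Prop :=
  ∃ u : Fin m, Sum.inr u ∈ e

/-- `M` is a matching of `G`: its members are edges of `G` and no two distinct
members share an endpoint. -/
def IsMatchingF {α : Type*} (G : SimpleGraph α) (M : Finset (Sym2 α)) : Prop :=
  (↑M : Set (Sym2 α)) ⊆ G.edgeSet ∧
    ∀ e ∈ M, ∀ f ∈ M, e ≠ f → ∀ v : α, v ∈ e → v ∉ f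

/-- `M` is a perfect matching of `G`: a matching covering every vertex. -/
def IsPerfectMatchingF {α : Type*} (G : SimpleGraph α) (M : Finset (Sym2 α)) :
    Prop :=
  IsMatchingF G M ∧ ∀ v : α, ∃ e ∈ M, v ∈ e


/-- The weight on edges of `H` extending `w'` by `0` on the fresh edges `F`. -/
noncomputable def liftedWeight {V' : Type*} {m : ℕ} (w' : Sym2 V' → ℝ) :
    Sym2 (V' ⊕ Fin m) → ℝ :=
  Sym2.lift ⟨fun x y =>
    match x, y with
    | Sum.inl a, Sum.inl b => w' s(a, b)
    | _, _ => 0,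
    by rintro (a | a) (b | b) <;> simp [Sym2.eq_swap]⟩

/-!
In a perfect matching of `H` every fresh vertex is matched into `V'`, so exactly
`m = |V'| - 2r'` of its edges lie in `F` and the remaining `2r'` original vertices are covered
by `r'` edges of `G'`. Conversely, an `r'`-matching of `G'` leaves exactly `m` original vertices
uncovered; matching them bijectively to the fresh vertices gives a perfect matching of `H` of the
same weight, because `F`-edges weigh `0`. Maximality of `M*` then gives the inequality.
-/

section Matchings

variable {α : Type*} {G : SimpleGraph α} {M N : Finset (Sym2 α)}

theorem IsMatchingF.subset (hN : IsMatchingF G N) (hMN : M ⊆ N) : IsMatchingF G M :=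
  ⟨(coe_subset.mpr hMN).trans hN.1, fun e he f hf => hN.2 e (hMN he) f (hMN hf)⟩

variable [DecidableEq α]

theorem IsMatchingF.union (hM : IsMatchingF G M) (hN : IsMatchingF G N)
    (hMN : ∀ e ∈ M, ∀ f ∈ N, ∀ v ∈ e, v ∉ f) : IsMatchingF G (M ∪ N) := by
  refine ⟨by simpa only [coe_union, Set.union_subset_iff] using ⟨hM.1, hN.1⟩, ?_⟩
  intro e he f hf hef v hve hvf
  rcases mem_union.mp he with he | he <;> rcases mem_union.mp hf with hf | hf
  · exact hM.2 e he f hf hef v hve hvf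
  · exact hMN e he f hf v hve hvf
  · exact hMN f hf e he v hvf hve
  · exact hN.2 e he f hf hef v hve hvf

theorem IsMatchingF.pairwiseDisjoint_toFinset (hM : IsMatchingF G M) :
    (M : Set (Sym2 α)).PairwiseDisjoint Sym2.toFinset := by
  intro e he f hf hef
  simp only [Function.onFun, disjoint_left, Sym2.mem_toFinset]
  exact hM.2 e he f hf hef

theorem IsMatchingF.card_biUnion_toFinset (hM : IsMatchingF G M) :
    #(M.biUnion Sym2.toFinset) = 2 * #M := by
  rw [card_biUnion hM.pairwiseDisjoint_toFinset, mul_comm, ← smul_eq_mul, ← sum_const]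
  exact sum_congr rfl fun e he =>
    Sym2.card_toFinset_of_not_isDiag e (G.not_isDiag_of_mem_edgeSet (hM.1 he))

variable [Fintype α]

theorem IsPerfectMatchingF.biUnion_toFinset (hM : IsPerfectMatchingF G M) :
    M.biUnion Sym2.toFinset = univ :=
  eq_univ_of_forall fun v => by simpa only [mem_biUnion, Sym2.mem_toFinset] using hM.2 v

theorem IsPerfectMatchingF.two_mul_card (hM : IsPerfectMatchingF G M) :
    2 * #M = Fintype.card α := by
  rw [← hM.1.card_biUnion_toFinset, hM.biUnion_toFinset, card_univ]

theorem IsPerfectMatchingF.card_eq_sum_card_inter (hM : IsPerfectMatchingF G M)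
    (s : Finset α) : #s = ∑ e ∈ M, #(e.toFinset ∩ s) := by
  rw [← card_biUnion (hM.1.pairwiseDisjoint_toFinset.mono fun _ => inter_subset_left),
    ← biUnion_inter, hM.biUnion_toFinset, univ_inter]

end Matchings

section AuxiliaryGraph

variable {V' : Type*} {m : ℕ} {G' : SimpleGraph V'}

theorem Hgraph.mem_edgeSet_cases {e : Sym2 (V' ⊕ Fin m)} (he : e ∈ (Hgraph G' m).edgeSet) :
    (∃ e' ∈ G'.edgeSet, e = e'.map Sum.inl) ∨
      ∃ (a : V') (u : Fin m), e = s(Sum.inl a, Sum.inr u) := by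
  induction e using Sym2.ind with
  | _ x y =>
    rw [SimpleGraph.mem_edgeSet] at he
    rcases x with a | a <;> rcases y with b | b
    · exact Or.inl ⟨s(a, b), he, rfl⟩
    · exact Or.inr ⟨a, b, rfl⟩
    · exact Or.inr ⟨b, a, Sym2.eq_swap⟩
    · exact he.elim

theorem isFEdge_mk_inr (a : V') (u : Fin m) : isFEdge (s(Sum.inl a, Sum.inr u)) :=
  ⟨u, Sym2.mem_mk_right _ _⟩

theorem not_isFEdge_map_inl (e : Sym2 V') :
    ¬ isFEdge (e.map Sum.inl : Sym2 (V' ⊕ Fin m)) := by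
  rintro ⟨u, hu⟩
  obtain ⟨a, -, ha⟩ := Sym2.mem_map.mp hu
  exact Sum.inl_ne_inr ha

theorem Hgraph.exists_map_inl_of_not_isFEdge {e : Sym2 (V' ⊕ Fin m)}
    (he : e ∈ (Hgraph G' m).edgeSet) (hF : ¬ isFEdge e) :
    ∃ e' ∈ G'.edgeSet, e = e'.map Sum.inl :=
  (Hgraph.mem_edgeSet_cases he).resolve_right fun ⟨a, u, h⟩ => hF (h ▸ isFEdge_mk_inr a u)

theorem liftedWeight_map_inl (w' : Sym2 V' → ℝ) (e : Sym2 V') :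
    liftedWeight (m := m) w' (e.map Sum.inl) = w' e := by
  induction e using Sym2.ind with
  | _ a b => rfl

theorem liftedWeight_of_isFEdge (w' : Sym2 V' → ℝ) {e : Sym2 (V' ⊕ Fin m)}
    (hF : isFEdge e) : liftedWeight w' e = 0 := by
  obtain ⟨u, hu⟩ := hF
  induction e using Sym2.ind with
  | _ x y =>
    rcases Sym2.mem_iff.mp hu with rfl | rfl
    · rcases y with b | b <;> rfl
    · rcases x with b | b <;> rfl

theorem sum_filter_not_isFEdge_liftedWeight (w' : Sym2 V' → ℝ)
    (M : Finset (Sym2 (V' ⊕ Fin m))) :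
    ∑ e ∈ M.filter (fun e => ¬ isFEdge e), liftedWeight w' e =
      ∑ e ∈ M, liftedWeight w' e :=
  sum_filter_of_ne fun _ _ hw hF => hw (liftedWeight_of_isFEdge w' hF)

theorem IsMatchingF.image_map_inl {M' : Finset (Sym2 V')} (hM' : IsMatchingF G' M') :
    IsMatchingF (Hgraph G' m) (M'.image (Sym2.map Sum.inl)) := by
  refine ⟨?_, ?_⟩
  · simp only [coe_image, Set.image_subset_iff]
    intro e he
    induction e using Sym2.ind with
    | _ a b => exact hM'.1 he
  · simp only [mem_image]
    rintro _ ⟨e, he, rfl⟩ _ ⟨f, hf, rfl⟩ hef v hve hvf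
    obtain ⟨a, hae, rfl⟩ := Sym2.mem_map.mp hve
    obtain ⟨b, hbf, hba⟩ := Sym2.mem_map.mp hvf
    exact hM'.2 e he f hf (ne_of_apply_ne _ hef) a hae (Sum.inl_injective hba ▸ hbf)

theorem Hgraph.isMatchingF_pendant {f : Fin m → V'} (hf : Function.Injective f) :
    IsMatchingF (Hgraph G' m) (univ.image fun u => s(Sum.inl (f u), Sum.inr u)) := by
  refine ⟨fun _ he => ?_, ?_⟩
  · obtain ⟨u, -, rfl⟩ := mem_image.mp he
    trivial
  · simp only [mem_image, mem_univ, true_and]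
    rintro _ ⟨u, rfl⟩ _ ⟨u', rfl⟩ hne v hv hv'
    apply hne
    simp only [Sym2.mem_iff] at hv hv'
    rcases hv with rfl | rfl <;> rcases hv' with h | h <;> simp_all [hf.eq_iff]

variable [Fintype V']

theorem Hgraph.card_filter_isFEdge {M : Finset (Sym2 (V' ⊕ Fin m))}
    (hM : IsPerfectMatchingF (Hgraph G' m) M) : #(M.filter isFEdge) = m := by
  -- count the fresh vertices edge by edge: an `F`-edge contains one, any other edge none
  have hcount : ∀ e ∈ M, #(e.toFinset ∩ univ.map .inr) = if isFEdge e then 1 else 0 := by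
    intro e he
    rcases Hgraph.mem_edgeSet_cases (hM.1.1 he) with ⟨e', -, rfl⟩ | ⟨a, u, rfl⟩
    · rw [if_neg (not_isFEdge_map_inl e'), card_eq_zero, eq_empty_iff_forall_notMem]
      simp [Sym2.mem_map]
    · rw [if_pos (isFEdge_mk_inr a u), card_eq_one]
      exact ⟨.inr u, by ext x; simp [Sym2.toFinset_mk_eq]⟩
  simpa [card_filter, ← sum_congr rfl hcount] using
    (hM.card_eq_sum_card_inter (univ.map .inr)).symm

theorem IsMatchingF.exists_isPerfectMatchingF_Hgraph {M' : Finset (Sym2 V')}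
    (hM' : IsMatchingF G' M') (hcard : 2 * #M' + m = Fintype.card V') (w' : Sym2 V' → ℝ) :
    ∃ M, IsPerfectMatchingF (Hgraph G' m) M ∧
      ∑ e ∈ M, liftedWeight w' e = ∑ e ∈ M', w' e := by
  set S := M'.biUnion Sym2.toFinset
  have hSc : #Sᶜ = m := by rw [card_compl, hM'.card_biUnion_toFinset]; omega
  set g := (Sᶜ).equivFinOfCardEq hSc
  set f : Fin m → V' := fun u => g.symm u
  have hf : Function.Injective f := Subtype.val_injective.comp g.symm.injective
  have hfS : ∀ u, f u ∉ S := fun u => mem_compl.mp (g.symm u).2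
  have hSf : ∀ v ∉ S, ∃ u, f u = v :=
    fun v hv => ⟨g ⟨v, mem_compl.mpr hv⟩, by simp [f]⟩
  set M₁ : Finset (Sym2 (V' ⊕ Fin m)) := M'.image (Sym2.map Sum.inl)
  set M₂ := univ.image fun u => s(Sum.inl (f u), Sum.inr u)
  have hsep : ∀ e ∈ M₁, ∀ e₂ ∈ M₂, ∀ v ∈ e, v ∉ e₂ := by
    simp only [M₁, M₂, mem_image, mem_univ, true_and]
    rintro _ ⟨e, he, rfl⟩ _ ⟨u, rfl⟩ v hv hv'
    obtain ⟨a, ha, rfl⟩ := Sym2.mem_map.mp hv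
    simp only [Sym2.mem_iff, Sum.inl.injEq, reduceCtorEq, or_false] at hv'
    exact hfS u (hv' ▸ mem_biUnion.mpr ⟨e, he, Sym2.mem_toFinset.mpr ha⟩)
  refine ⟨M₁ ∪ M₂,
    ⟨hM'.image_map_inl.union (Hgraph.isMatchingF_pendant hf) hsep, ?_⟩, ?_⟩
  · rintro (v | u)
    · by_cases hv : v ∈ S
      · obtain ⟨e, he, hve⟩ := mem_biUnion.mp hv
        exact ⟨e.map Sum.inl, mem_union_left _ (mem_image_of_mem _ he),
          Sym2.mem_map.mpr ⟨v, Sym2.mem_toFinset.mp hve, rfl⟩⟩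
      · obtain ⟨u, rfl⟩ := hSf v hv
        exact ⟨_, mem_union_right _ (mem_image_of_mem _ (mem_univ u)), Sym2.mem_mk_left _ _⟩
    · exact ⟨_, mem_union_right _ (mem_image_of_mem _ (mem_univ u)), Sym2.mem_mk_right _ _⟩
  · have hdisj : Disjoint M₁ M₂ :=
      disjoint_left.mpr fun e he₁ he₂ => hsep e he₁ e he₂ _ e.out_fst_mem e.out_fst_mem
    have hM₂ : ∑ e ∈ M₂, liftedWeight w' e = 0 := sum_eq_zero fun e he => by
      obtain ⟨u, -, rfl⟩ := mem_image.mp he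
      exact liftedWeight_of_isFEdge w' (isFEdge_mk_inr _ u)
    rw [sum_union hdisj, hM₂, add_zero,
      sum_image fun _ _ _ _ h => Sym2.map.injective Sum.inl_injective h]
    exact sum_congr rfl fun e _ => liftedWeight_map_inl w' e

end AuxiliaryGraph

theorem maxWeight_perfectMatching_gives_max_matching_general
    {V' : Type*} [Fintype V'] (G' : SimpleGraph V') (r' : ℕ)
    (h2r : 2 * r' ≤ Fintype.card V') (w' : Sym2 V' → ℝ)
    (Mstar : Finset (Sym2 (V' ⊕ Fin (Fintype.card V' - 2 * r'))))
    (hperf : IsPerfectMatchingF (Hgraph G' (Fintype.card V' - 2 * r')) Mstar)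
    (hmax : ∀ M : Finset (Sym2 (V' ⊕ Fin (Fintype.card V' - 2 * r'))),
      IsPerfectMatchingF (Hgraph G' (Fintype.card V' - 2 * r')) M →
        ∑ e ∈ M, liftedWeight w' e ≤ ∑ e ∈ Mstar, liftedWeight w' e) :
    IsMatchingF (Hgraph G' (Fintype.card V' - 2 * r'))
        (Mstar.filter (fun e => ¬ isFEdge e)) ∧
      (Mstar.filter (fun e => ¬ isFEdge e)).card = r' ∧
      (∀ e ∈ Mstar.filter (fun e => ¬ isFEdge e),
        ∃ e' ∈ G'.edgeSet, e = e'.map Sum.inl) ∧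
      ∀ M' : Finset (Sym2 V'), IsMatchingF G' M' → M'.card = r' →
        ∑ e ∈ M', w' e ≤ ∑ e ∈ Mstar.filter (fun e => ¬ isFEdge e), liftedWeight w' e := by
  have hcard : #(Mstar.filter fun e => ¬ isFEdge e) = r' := by
    have htotal := hperf.two_mul_card
    have hF := Hgraph.card_filter_isFEdge hperf
    have hsplit := card_filter_add_card_filter_not (s := Mstar) isFEdge
    rw [Fintype.card_sum, Fintype.card_fin] at htotal
    omega
  refine ⟨hperf.1.subset (filter_subset _ _), hcard, fun e he => ?_, fun M' hM' hM'card => ?_⟩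
  · obtain ⟨heM, hF⟩ := mem_filter.mp he
    exact Hgraph.exists_map_inl_of_not_isFEdge (hperf.1.1 heM) hF
  · obtain ⟨M, hM, hw⟩ :=
      hM'.exists_isPerfectMatchingF_Hgraph (m := Fintype.card V' - 2 * r') (by omega) w'
    calc ∑ e ∈ M', w' e = ∑ e ∈ M, liftedWeight w' e := hw.symm
      _ ≤ ∑ e ∈ Mstar, liftedWeight w' e := hmax M hM
      _ = _ := (sum_filter_not_isFEdge_liftedWeight w' Mstar).symm

/-- If `M*` is a maximum-weight perfect matching of `H`, then `M* \ F` is a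
matching of size `r'` whose edges come from `G'`, and its weight is at least
the weight of every size-`r'` matching of `G'`. -/
theorem maxWeight_perfectMatching_gives_max_matching
    {V' : Type*} [Fintype V'] [DecidableEq V'] (G' : SimpleGraph V') (r' : ℕ)
    (h2r : 2 * r' ≤ Fintype.card V') (w' : Sym2 V' → ℝ)
    (Mstar : Finset (Sym2 (V' ⊕ Fin (Fintype.card V' - 2 * r'))))
    (hperf : IsPerfectMatchingF (Hgraph G' (Fintype.card V' - 2 * r')) Mstar)
    (hmax : ∀ M : Finset (Sym2 (V' ⊕ Fin (Fintype.card V' - 2 * r'))),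
      IsPerfectMatchingF (Hgraph G' (Fintype.card V' - 2 * r')) M →
        ∑ e ∈ M, liftedWeight w' e ≤ ∑ e ∈ Mstar, liftedWeight w' e) :
    IsMatchingF (Hgraph G' (Fintype.card V' - 2 * r'))
        (Mstar.filter (fun e => ¬ isFEdge e)) ∧
      (Mstar.filter (fun e => ¬ isFEdge e)).card = r' ∧
      (∀ e ∈ Mstar.filter (fun e => ¬ isFEdge e),
        ∃ e' ∈ G'.edgeSet, e = e'.map Sum.inl) ∧
      ∀ M' : Finset (Sym2 V'), IsMatchingF G' M' → M'.card = r' →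
        ∑ e ∈ M', w' e ≤ ∑ e ∈ Mstar.filter (fun e => ¬ isFEdge e), liftedWeight w' e :=
  maxWeight_perfectMatching_gives_max_matching_general G' r' h2r w' Mstar hperf hmax
end

section
/- Let G = (V, E) be a graph with edge weights w, in which every minimum cut has exactly 2 edges. Let H be the graph on vertex set E with an edge between e and f whenever {e, f} is a (minimum) cut of G. Then for every t ∈ ℝ: H has a subgraph H' with exactly k edges satisfying Σ_{e ∈ E} f_e(d_{H'}(e)) ≥ t, where f_e(i) = w(e)·i·(k − i), if and only if there exist k distinct 2-element cuts C₁, ..., C_k of G with Σ_{1 ≤ i < j ≤ k} w(C_i △ C_j) ≥ t. -/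
/-! An edge `e` of `G` lies in `C_i ∆ C_j` iff exactly one of `C_i`, `C_j` contains it, so if
`d(e)` of the `k` cuts contain `e`, it is counted by `d(e) (k - d(e))` of the pairs `i < j`.
Two-element cuts are exactly the edges of `H` (read as unordered pairs of edges of `G`), so `k`
distinct such cuts are the `k` edges of a subgraph `H'` with `d_{H'}(e) = d(e)`, and the two
objectives coincide. -/

open Finset
open scoped Classical

/-- The set of edges of `G` crossing the cut `(X, Xᶜ)`. -/
noncomputable def cutEdges {α : Type*} [Fintype α] (G : SimpleGraph α)
    (X : Finset α) : Finset (Sym2 α) :=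
  Finset.univ.filter fun e => e ∈ G.edgeSet ∧ ∃ a ∈ X, ∃ b ∈ Xᶜ, e = s(a, b)

/-- `C` is (the edge set of) a cut of `G`. -/
def IsCutSet {α : Type*} [Fintype α] (G : SimpleGraph α)
    (C : Finset (Sym2 α)) : Prop :=
  ∃ X : Finset α, X.Nonempty ∧ X ≠ Finset.univ ∧ C = cutEdges G X

/-- The auxiliary graph `H` on the edges of `G`: two edges `e ≠ f` are
adjacent iff `{e, f}` is a cut of `G`. -/
noncomputable def cutPairGraph {α : Type*} [Fintype α] (G : SimpleGraph α) :
    SimpleGraph (Sym2 α) where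
  Adj e f := e ≠ f ∧ IsCutSet G {e, f}
  symm := by
    constructor
    intro e f h
    exact ⟨h.1.symm, by rw [Finset.pair_comm]; exact h.2⟩
  loopless := ⟨fun e h => h.1 rfl⟩

open scoped symmDiff

lemma card_filter_lt_not_iff {ι : Type*} [Fintype ι] [LinearOrder ι] (P : ι → Prop)
    [DecidablePred P] :
    #{p : ι × ι | p.1 < p.2 ∧ ¬(P p.1 ↔ P p.2)} = #{i | P i} * #{i | ¬P i} := by
  rw [← card_product]
  refine card_nbij' (fun p => if P p.1 then p else p.swap)
    (fun p => if p.1 < p.2 then p else p.swap) ?_ ?_ ?_ ?_ <;> rintro ⟨a, b⟩ <;>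
    simp only [coe_filter, mem_univ, true_and, coe_product, Set.mem_prod, Set.mem_ofPred_eq] <;>
    intro h
  all_goals
    by_cases P a <;> by_cases P b <;> rcases lt_trichotomy a b with hab | rfl | hab <;>
      simp_all [lt_asymm]

lemma sum_pairs_sum_symmDiff {α ι R : Type*} [DecidableEq α] [Fintype ι] [LinearOrder ι]
    [CommRing R] (w : α → R) (C : ι → Finset α) {E : Finset α} (hE : ∀ i, C i ⊆ E) :
    ∑ p ∈ univ.filter (fun p : ι × ι => p.1 < p.2), ∑ e ∈ C p.1 ∆ C p.2, w e
      = ∑ e ∈ E, w e * #{i | e ∈ C i} * (Fintype.card ι - #{i | e ∈ C i}) := by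
  have hsub (p : ι × ι) : C p.1 ∆ C p.2 ⊆ E :=
    symmDiff_subset_union.trans (union_subset (hE _) (hE _))
  have hcount (e : α) : #{p : ι × ι | p.1 < p.2 ∧ e ∈ C p.1 ∆ C p.2}
      = #{i | e ∈ C i} * (Fintype.card ι - #{i | e ∈ C i} : R) := by
    have hcompl : (#{i | e ∉ C i} : R) = Fintype.card ι - #{i | e ∈ C i} := by
      rw [eq_sub_iff_add_eq', ← Nat.cast_add, card_filter_add_card_filter_not, card_univ]
    rw [← hcompl, ← Nat.cast_mul, ← card_filter_lt_not_iff]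
    congr 2
    ext p
    simp only [mem_filter, mem_univ, true_and, mem_symmDiff]
    tauto
  calc ∑ p ∈ univ.filter (fun p : ι × ι => p.1 < p.2), ∑ e ∈ C p.1 ∆ C p.2, w e
      = ∑ p ∈ univ.filter (fun p : ι × ι => p.1 < p.2),
          ∑ e ∈ E, if e ∈ C p.1 ∆ C p.2 then w e else 0 := by
        refine sum_congr rfl fun p _ => ?_
        rw [sum_ite_mem, inter_eq_right.mpr (hsub p)]
    _ = ∑ e ∈ E, #{p : ι × ι | p.1 < p.2 ∧ e ∈ C p.1 ∆ C p.2} * w e := by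
        rw [sum_comm]
        refine sum_congr rfl fun e _ => ?_
        rw [← sum_filter, sum_const, filter_filter, nsmul_eq_mul]
    _ = ∑ e ∈ E, w e * #{i | e ∈ C i} * (Fintype.card ι - #{i | e ∈ C i}) := by
        refine sum_congr rfl fun e _ => ?_
        rw [hcount]
        ring

lemma Finset.exists_injective_image_eq_of_card_eq {β : Type*} [DecidableEq β] {S : Finset β}
    {k : ℕ} (hk : #S = k) : ∃ ψ : Fin k → β, Function.Injective ψ ∧ univ.image ψ = S := by
  refine ⟨(↑) ∘ (S.equivFinOfCardEq hk).symm,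
    Subtype.val_injective.comp (S.equivFinOfCardEq hk).symm.injective, ?_⟩
  ext b
  simp only [mem_image, mem_univ, true_and, Function.comp_apply]
  exact ⟨fun ⟨i, hi⟩ => hi ▸ coe_mem _,
    fun hb => ⟨_, congrArg Subtype.val ((S.equivFinOfCardEq hk).symm_apply_apply ⟨b, hb⟩)⟩⟩

namespace Sym2

variable {α : Type*} [DecidableEq α]

lemma toFinset_injective : Function.Injective (toFinset : Sym2 α → Finset α) :=
  fun _ _ h => Sym2.ext fun x => by rw [← mem_toFinset, h, mem_toFinset]

lemma exists_toFinset_eq_of_card_eq_two {s : Finset α} (hs : #s = 2) :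
    ∃ z : Sym2 α, z.toFinset = s := by
  obtain ⟨a, b, -, rfl⟩ := card_eq_two.1 hs
  exact ⟨s(a, b), toFinset_mk_eq⟩

end Sym2

section Cuts

variable {V : Type*} [Fintype V] {G : SimpleGraph V}

lemma IsCutSet.subset_filter_mem_edgeSet {C : Finset (Sym2 V)} (hC : IsCutSet G C) :
    C ⊆ univ.filter (· ∈ G.edgeSet) := by
  obtain ⟨X, -, -, rfl⟩ := hC
  intro e he
  simp only [cutEdges, mem_filter, mem_univ, true_and] at he ⊢
  exact he.1

lemma mem_edgeSet_cutPairGraph [DecidableEq V] {z : Sym2 (Sym2 V)} :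
    z ∈ (cutPairGraph G).edgeSet ↔ IsCutSet G z.toFinset ∧ #z.toFinset = 2 := by
  induction z using Sym2.ind with
  | _ e f =>
    simp only [SimpleGraph.mem_edgeSet, cutPairGraph, Sym2.toFinset_mk_eq, card_pair_eq_two_iff]
    rw [and_comm]
    congr!

end Cuts

theorem diverse_min_cuts_degree_reduction_general
    {V : Type*} [Fintype V] [DecidableEq V] (G : SimpleGraph V)
    (w : Sym2 V → ℝ)
    (k : ℕ) (t : ℝ) :
    (∃ S : Finset (Sym2 (Sym2 V)),
        (↑S : Set (Sym2 (Sym2 V))) ⊆ (cutPairGraph G).edgeSet ∧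
        S.card = k ∧
        t ≤ ∑ e ∈ Finset.univ.filter (fun e : Sym2 V => e ∈ G.edgeSet),
              w e * ((S.filter fun p => e ∈ p).card : ℝ) *
                ((k : ℝ) - ((S.filter fun p => e ∈ p).card : ℝ))) ↔
      ∃ C : Fin k → Finset (Sym2 V),
        Function.Injective C ∧
        (∀ i, IsCutSet G (C i) ∧ (C i).card = 2) ∧
        t ≤ ∑ p ∈ Finset.univ.filter (fun p : Fin k × Fin k => p.1 < p.2),
              ∑ e ∈ symmDiff (C p.1) (C p.2), w e := by
  have objective (ψ : Fin k → Sym2 (Sym2 V)) (hedge : ∀ i, ψ i ∈ (cutPairGraph G).edgeSet) :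
      ∑ p ∈ univ.filter (fun p : Fin k × Fin k => p.1 < p.2),
          ∑ e ∈ (ψ p.1).toFinset ∆ (ψ p.2).toFinset, w e
        = ∑ e ∈ univ.filter (fun e : Sym2 V => e ∈ G.edgeSet),
            w e * #{i | e ∈ ψ i} * (k - #{i | e ∈ ψ i}) := by
    simpa only [Sym2.mem_toFinset, Fintype.card_fin] using
      sum_pairs_sum_symmDiff w (fun i => (ψ i).toFinset)
        fun i => (mem_edgeSet_cutPairGraph.1 (hedge i)).1.subset_filter_mem_edgeSet
  constructor
  · rintro ⟨S, hS, hk, ht⟩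
    obtain ⟨ψ, hψinj, rfl⟩ := exists_injective_image_eq_of_card_eq hk
    have hedge (i : Fin k) : ψ i ∈ (cutPairGraph G).edgeSet := hS (by simp)
    refine ⟨fun i => (ψ i).toFinset, Sym2.toFinset_injective.comp hψinj,
      fun i => mem_edgeSet_cutPairGraph.1 (hedge i), ?_⟩
    rw [objective ψ hedge]
    simpa only [filter_image, card_image_of_injective _ hψinj] using ht
  · rintro ⟨C, hC, hcut, ht⟩
    choose ψ hψC using fun i => Sym2.exists_toFinset_eq_of_card_eq_two (hcut i).2
    obtain rfl : (fun i => (ψ i).toFinset) = C := funext hψC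
    have hedge (i : Fin k) : ψ i ∈ (cutPairGraph G).edgeSet :=
      mem_edgeSet_cutPairGraph.2 (hcut i)
    have hψinj : Function.Injective ψ := hC.of_comp (f := Sym2.toFinset)
    refine ⟨univ.image ψ, by simpa [Set.range_subset_iff] using hedge,
      by simp [card_image_of_injective _ hψinj], ?_⟩
    rw [objective ψ hedge] at ht
    simpa only [filter_image, card_image_of_injective _ hψinj] using ht

/-- Lemma 11: assuming every cut of `G` has at least `2` edges, `H` has a
`k`-edge subgraph `H'` with `Σ_e w(e)·d_{H'}(e)·(k − d_{H'}(e)) ≥ t` iff there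
are `k` distinct `2`-element cuts `C₁, …, C_k` of `G` with
`Σ_{i<j} w(C_i △ C_j) ≥ t`. -/
theorem diverse_min_cuts_degree_reduction
    {V : Type*} [Fintype V] [DecidableEq V] (G : SimpleGraph V)
    (w : Sym2 V → ℝ) (hw : ∀ e, 0 ≤ w e)
    (hmin : ∀ X : Finset V, X.Nonempty → X ≠ Finset.univ →
      2 ≤ (cutEdges G X).card)
    (k : ℕ) (t : ℝ) :
    (∃ S : Finset (Sym2 (Sym2 V)),
        (↑S : Set (Sym2 (Sym2 V))) ⊆ (cutPairGraph G).edgeSet ∧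
        S.card = k ∧
        t ≤ ∑ e ∈ Finset.univ.filter (fun e : Sym2 V => e ∈ G.edgeSet),
              w e * ((S.filter fun p => e ∈ p).card : ℝ) *
                ((k : ℝ) - ((S.filter fun p => e ∈ p).card : ℝ))) ↔
      ∃ C : Fin k → Finset (Sym2 V),
        Function.Injective C ∧
        (∀ i, IsCutSet G (C i) ∧ (C i).card = 2) ∧
        t ≤ ∑ p ∈ Finset.univ.filter (fun p : Fin k × Fin k => p.1 < p.2),
              ∑ e ∈ symmDiff (C p.1) (C p.2), w e :=
  diverse_min_cuts_degree_reduction_general G w k t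
end
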